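/- For every k ∈ ℕ and all (x,y,q) ∈ ℝ³, the k-th power of the operator X_s applied to the Gaussian e^{−q²/2} (regarded as a function of (x,y,q)) satisfies X_s^k e^{−q²/2} = e^{−q²/2} · Σ_{m=0}^{⌊k/2⌋} k! (i x − y)^{k−m} q^{k−2m} y^m / (m! (k−2m)! 2^m). -/

import Mathlib

noncomputable section

open Complex Finset

/-- Points `(x, y, q)` of `ℝ³`. -/
abbrev P3 := ℝ × ℝ × ℝ

/-- Partial derivative with respect to `x`. -/
def pdx (f : P3 → ℂ) : P3 → ℂ := fun p => deriv (fun t => f (t, p.2.1, p.2.2)) p.1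

/-- Partial derivative with respect to `y`. -/
def pdy (f : P3 → ℂ) : P3 → ℂ := fun p => deriv (fun t => f (p.1, t, p.2.2)) p.2.1

/-- Partial derivative with respect to `q`. -/
def pdq (f : P3 → ℂ) : P3 → ℂ := fun p => deriv (fun t => f (p.1, p.2.1, t)) p.2.2

/-- The symplectic Dirac operator `D_s f = i q ∂_y f − ∂_x ∂_q f`. -/
def Ds (f : P3 → ℂ) : P3 → ℂ := fun p =>
  Complex.I * (p.2.2 : ℂ) * pdy f p - pdx (pdq f) p

/-- The operator `X_s f = y ∂_q f + i x q f`. -/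
def Xs (f : P3 → ℂ) : P3 → ℂ := fun p =>
  (p.2.1 : ℂ) * pdq f p + Complex.I * (p.1 : ℂ) * (p.2.2 : ℂ) * f p

/-- The Euler operator `E f = x ∂_x f + y ∂_y f`. -/
def Eul (f : P3 → ℂ) : P3 → ℂ := fun p =>
  (p.1 : ℂ) * pdx f p + (p.2.1 : ℂ) * pdy f p

/-- The Gaussian `e^{−q²/2}`, regarded as a function of `(x,y,q) ∈ ℝ³`. -/
def gauss : P3 → ℂ := fun p => Complex.exp (-(p.2.2 : ℂ) ^ 2 / 2)

/-!
Writing `a = i x − y`, the operator conjugated by the Gaussian is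
`e^{q²/2} X_s (e^{−q²/2} f) = y ∂_q f + a q f`. In the variables `u = a q`, `v = a y` this is
`v ∂_u + u`, the raising operator of the Hermite polynomials: the homogeneous Hermite polynomials
`H_k(u, v) = Σ_m k!/(m!(k−2m)!2^m) u^{k−2m} v^m` satisfy `∂_u H_k = k H_{k−1}` and
`H_{k+1} = u H_k + k v H_{k−1}`, hence `X_s^k e^{−q²/2} = e^{−q²/2} H_k(a q, a y)`.
-/

open scoped Nat

/-- The number of `m`-edge matchings of `k` points, `k! / (m! (k - 2m)! 2^m)`. -/
def hermiteCoeff (k m : ℕ) : ℕ := k.choose (2 * m) * (2 * m - 1)‼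

namespace hermiteCoeff

lemma eq_zero_of_lt {k m : ℕ} (h : k < 2 * m) : hermiteCoeff k m = 0 := by
  simp [hermiteCoeff, Nat.choose_eq_zero_of_lt h]

@[simp]
lemma zero_right (k : ℕ) : hermiteCoeff k 0 = 1 := by
  simp [hermiteCoeff]

lemma succ_mul (k m : ℕ) :
    hermiteCoeff (k + 1) m * (k + 1 - 2 * m) = (k + 1) * hermiteCoeff k m := by
  rw [hermiteCoeff, hermiteCoeff, mul_right_comm, ← Nat.choose_mul_succ_eq]
  ring

lemma add_two_succ (k m : ℕ) :
    hermiteCoeff (k + 2) (m + 1) = hermiteCoeff (k + 1) (m + 1) + (k + 1) * hermiteCoeff k m := by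
  have hodd : (2 * (m + 1) - 1)‼ = (2 * m + 1) * (2 * m - 1)‼ := Nat.doubleFactorial_add_one _
  rw [hermiteCoeff, hermiteCoeff, hermiteCoeff, hodd, mul_add_one 2 m,
    Nat.choose_succ_succ' (k + 1) (2 * m + 1), ← mul_assoc (k + 1), Nat.add_one_mul_choose_eq]
  ring

lemma mul_factorial {k m : ℕ} (h : 2 * m ≤ k) :
    hermiteCoeff k m * (m ! * (k - 2 * m)! * 2 ^ m) = k ! := by
  have heven : (2 * m - 1)‼ * (2 ^ m * m !) = (2 * m)! := by
    rcases m with _ | m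
    · rfl
    · rw [← Nat.doubleFactorial_two_mul, mul_comm, mul_add_one,
        show 2 * m + 2 = (2 * m + 1) + 1 from rfl, Nat.factorial_eq_mul_doubleFactorial]
      rfl
  rw [← Nat.choose_mul_factorial_mul_factorial h, hermiteCoeff, ← heven]
  ring

end hermiteCoeff

/-- The homogeneous Hermite polynomial; `homHermite k u (-1)` is the probabilists' `He_k u`. -/
def homHermite {R : Type*} [CommSemiring R] (k : ℕ) (u v : R) : R :=
  ∑ m ∈ range (k / 2 + 1), (hermiteCoeff k m : R) * u ^ (k - 2 * m) * v ^ m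

namespace homHermite

section CommSemiring

variable {R : Type*} [CommSemiring R]

@[simp]
lemma zero_left (u v : R) : homHermite 0 u v = 1 := by
  simp [homHermite]

lemma eq_sum_range (k : ℕ) {n : ℕ} (hn : k / 2 < n) (u v : R) :
    homHermite k u v = ∑ m ∈ range n, (hermiteCoeff k m : R) * u ^ (k - 2 * m) * v ^ m := by
  refine sum_subset (range_subset_range.2 hn) fun m _ hm => ?_
  rw [hermiteCoeff.eq_zero_of_lt (by grind)]
  simp

lemma hermiteCoeff_mul_pow_succ (k m : ℕ) (u : R) :
    u * ((hermiteCoeff k m : R) * u ^ (k - 2 * m)) = hermiteCoeff k m * u ^ (k + 1 - 2 * m) := by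
  rcases le_or_gt (2 * m) k with h | h
  · rw [show k + 1 - 2 * m = k - 2 * m + 1 by omega, pow_succ]
    ring
  · simp [hermiteCoeff.eq_zero_of_lt h]

lemma succ (k : ℕ) (u v : R) :
    homHermite (k + 1) u v = u * homHermite k u v + k * v * homHermite (k - 1) u v := by
  rcases k with _ | k
  · simp [homHermite]
  rw [eq_sum_range (k + 2) (n := k + 2 + 1) (by omega),
    eq_sum_range (k + 1) (n := k + 2 + 1) (by omega), Nat.add_sub_cancel,
    eq_sum_range k (n := k + 2) (by omega), sum_range_succ' _ (k + 2), sum_range_succ' _ (k + 2),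
    mul_add, mul_sum, mul_sum, add_right_comm, ← sum_add_distrib]
  congr 1
  · refine sum_congr rfl fun m _ => ?_
    rw [← mul_assoc, hermiteCoeff_mul_pow_succ, hermiteCoeff.add_two_succ,
      show k + 2 - 2 * (m + 1) = k - 2 * m by omega]
    push_cast
    ring
  · simp only [hermiteCoeff.zero_right, Nat.cast_one, mul_zero, tsub_zero, one_mul, pow_zero,
      mul_one]
    ring

end CommSemiring

variable {𝕜 : Type*} [NontriviallyNormedField 𝕜]

lemma hasDerivAt (k : ℕ) (u v : 𝕜) :
    HasDerivAt (homHermite k · v) (k * homHermite (k - 1) u v) u := by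
  rcases k with _ | k
  · simpa using hasDerivAt_const u (1 : 𝕜)
  have hsum (w : 𝕜) : homHermite (k + 1) w v =
      ∑ m ∈ range (k + 1), (hermiteCoeff (k + 1) m : 𝕜) * w ^ (k + 1 - 2 * m) * v ^ m :=
    eq_sum_range _ (by omega) _ _
  rw [funext hsum, Nat.add_sub_cancel, eq_sum_range k (n := k + 1) (by omega), mul_sum]
  refine HasDerivAt.fun_sum fun m _ => ?_
  refine (((hasDerivAt_pow (k + 1 - 2 * m) u).const_mul (hermiteCoeff (k + 1) m : 𝕜)).mul_const
    (v ^ m)).congr_deriv ?_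
  have hcoeff := congrArg (Nat.cast (R := 𝕜)) (hermiteCoeff.succ_mul k m)
  simp only [Nat.cast_mul, Nat.cast_add, Nat.cast_one] at hcoeff
  rw [show k + 1 - 2 * m - 1 = k - 2 * m by omega]
  push_cast
  linear_combination u ^ (k - 2 * m) * v ^ m * hcoeff

lemma mul_mul_eq_sum {K : Type*} [Field K] [CharZero K] (k : ℕ) (a q y : K) :
    homHermite k (a * q) (a * y) = ∑ m ∈ range (k / 2 + 1),
      (k ! : K) * a ^ (k - m) * q ^ (k - 2 * m) * y ^ m / (m ! * (k - 2 * m)! * 2 ^ m) := by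
  refine sum_congr rfl fun m hm => ?_
  have h2m : 2 * m ≤ k := by grind
  have hcoeff := congrArg (Nat.cast (R := K)) (hermiteCoeff.mul_factorial h2m)
  push_cast at hcoeff
  rw [eq_div_iff (by simp [Nat.factorial_ne_zero]), ← hcoeff, mul_pow, mul_pow,
    show k - m = (k - 2 * m) + m by omega]
  ring

end homHermite

lemma hasDerivAt_cexp_neg_sq_div_two (t : ℝ) :
    HasDerivAt (fun s : ℝ => cexp (-(s : ℂ) ^ 2 / 2)) (-t * cexp (-(t : ℂ) ^ 2 / 2)) t := by
  refine (((hasDerivAt_pow 2 (t : ℂ)).fun_neg.div_const 2).cexp).comp_ofReal.congr_deriv ?_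
  push_cast
  ring

lemma Xs_gauss_mul {f : P3 → ℂ} {p : P3}
    (hf : DifferentiableAt ℝ (fun t => f (p.1, p.2.1, t)) p.2.2) :
    Xs (fun p => gauss p * f p) p
      = gauss p * (p.2.1 * pdq f p + (I * p.1 - p.2.1) * p.2.2 * f p) := by
  obtain ⟨x, y, q⟩ := p
  dsimp only [Xs, pdq, gauss] at hf ⊢
  rw [((hasDerivAt_cexp_neg_sq_div_two q).fun_mul hf.hasDerivAt).deriv]
  ring

lemma hasDerivAt_homHermite_mul_ofReal (k : ℕ) (a w : ℂ) (t : ℝ) :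
    HasDerivAt (fun s : ℝ => homHermite k (a * s) w)
      (a * (k * homHermite (k - 1) (a * t) w)) t := by
  refine ((homHermite.hasDerivAt k (a * t) w).comp (t : ℂ)
    ((hasDerivAt_id (t : ℂ)).const_mul a)).comp_ofReal.congr_deriv ?_
  ring

lemma Xs_iterate_gauss (k : ℕ) :
    Xs^[k] gauss = fun p => gauss p *
      homHermite k ((I * p.1 - p.2.1) * p.2.2) ((I * p.1 - p.2.1) * p.2.1) := by
  induction k with
  | zero => simp
  | succ k ih =>
    ext ⟨x, y, q⟩
    set a : ℂ := I * x - y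
    have hderiv : HasDerivAt (fun t : ℝ => homHermite k (a * t) (a * y))
        (a * (k * homHermite (k - 1) (a * q) (a * y))) q :=
      hasDerivAt_homHermite_mul_ofReal k a (a * y) q
    rw [Function.iterate_succ_apply', ih, Xs_gauss_mul hderiv.differentiableAt, pdq, hderiv.deriv,
      homHermite.succ]
    ring

/-- `X_s^k e^{−q²/2} = e^{−q²/2} Σ_{m=0}^{⌊k/2⌋} k! (ix−y)^{k−m} q^{k−2m} y^m / (m!(k−2m)!2^m)`. -/
theorem Xs_pow_gauss (k : ℕ) (p : P3) :
    (Xs^[k] gauss) p = Complex.exp (-(p.2.2 : ℂ) ^ 2 / 2) *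
      ∑ m ∈ Finset.range (k / 2 + 1),
        (Nat.factorial k : ℂ) * (Complex.I * (p.1 : ℂ) - (p.2.1 : ℂ)) ^ (k - m) *
          (p.2.2 : ℂ) ^ (k - 2 * m) * (p.2.1 : ℂ) ^ m /
            ((Nat.factorial m : ℂ) * (Nat.factorial (k - 2 * m) : ℂ) * 2 ^ m) := by
  rw [Xs_iterate_gauss]
  exact congrArg (gauss p * ·) (homHermite.mul_mul_eq_sum k _ _ _)
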